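/- Under the assumptions of the reservoir update (φ L_φ-Lipschitz with L_φ ≤ 1, ‖W_r‖ ≤ α < 1, λ ∈ (0,1], κ = (1−λ)+λαL_φ), if two input sequences differ only at time t−τ, then ‖h^{(1)}_t − h^{(2)}_t‖ ≤ λ‖W_in‖·‖x^{(1)}_{t−τ} − x^{(2)}_{t−τ}‖·κ^{τ−1}. -/

import Mathlib

/-!
Before time `t − τ` the two trajectories see the same inputs, so they coincide. The single
differing input then separates them by at most `λ‖W_in‖‖Δx‖`, since `φ` is `L_φ ≤ 1`-Lipschitz.
From then on the inputs agree again, and the leaky update is a `κ`-contraction in the state: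
the leak contributes `1 − λ` and the nonlinearity `λ α L_φ`. So the gap shrinks by `κ` at each
of the remaining `τ − 1` steps.
-/

theorem eq_of_driven_by_inputs_eq_before {α β : Type*} (F : α → β → α) {h₁ h₂ : ℕ → α}
    {x₁ x₂ : ℕ → β} (hupd₁ : ∀ t, h₁ (t + 1) = F (h₁ t) (x₁ t))
    (hupd₂ : ∀ t, h₂ (t + 1) = F (h₂ t) (x₂ t)) (h0 : h₁ 0 = h₂ 0) :
    ∀ s, (∀ u < s, x₁ u = x₂ u) → h₁ s = h₂ s
  | 0, _ => h0
  | s + 1, hx => by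
    rw [hupd₁, hupd₂, eq_of_driven_by_inputs_eq_before F hupd₁ hupd₂ h0 s
      (fun u hu => hx u (hu.trans s.lt_succ_self)), hx s s.lt_succ_self]

section LeakyStep

variable {E F : Type*} [NormedAddCommGroup E] [NormedSpace ℝ E]
  [NormedAddCommGroup F] [NormedSpace ℝ F]

def leakyStep (lam : ℝ) (φ : E → E) (Wr : E →L[ℝ] E) (Win : F →L[ℝ] E) (b : E) (h : E)
    (x : F) : E :=
  (1 - lam) • h + lam • φ (Wr h + Win x + b)

variable {lam L : ℝ} {φ : E → E} {Wr : E →L[ℝ] E} {Win : F →L[ℝ] E} {b : E}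

theorem norm_leakyStep_sub_leakyStep_input_le (hlam : 0 ≤ lam) (hL : 0 ≤ L)
    (hφ : ∀ u v, ‖φ u - φ v‖ ≤ L * ‖u - v‖) (h : E) (x x' : F) :
    ‖leakyStep lam φ Wr Win b h x - leakyStep lam φ Wr Win b h x'‖ ≤
      lam * L * ‖Win‖ * ‖x - x'‖ := by
  have hsub : leakyStep lam φ Wr Win b h x - leakyStep lam φ Wr Win b h x' =
      lam • (φ (Wr h + Win x + b) - φ (Wr h + Win x' + b)) := by
    simp only [leakyStep, smul_sub]; abel
  have hφx : ‖φ (Wr h + Win x + b) - φ (Wr h + Win x' + b)‖ ≤ L * ‖Win (x - x')‖ := by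
    simpa only [map_sub, add_sub_add_right_eq_sub, add_sub_add_left_eq_sub]
      using hφ (Wr h + Win x + b) (Wr h + Win x' + b)
  calc ‖leakyStep lam φ Wr Win b h x - leakyStep lam φ Wr Win b h x'‖
      = lam * ‖φ (Wr h + Win x + b) - φ (Wr h + Win x' + b)‖ := by
        rw [hsub, norm_smul, Real.norm_of_nonneg hlam]
    _ ≤ lam * (L * (‖Win‖ * ‖x - x'‖)) := by
        gcongr; exact hφx.trans (by gcongr; exact Win.le_opNorm _)
    _ = lam * L * ‖Win‖ * ‖x - x'‖ := by ring

theorem norm_leakyStep_sub_leakyStep_state_le (hlam : 0 ≤ lam) (hlam1 : lam ≤ 1) (hL : 0 ≤ L)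
    (hφ : ∀ u v, ‖φ u - φ v‖ ≤ L * ‖u - v‖) {α : ℝ} (hWr : ‖Wr‖ ≤ α) (h h' : E) (x : F) :
    ‖leakyStep lam φ Wr Win b h x - leakyStep lam φ Wr Win b h' x‖ ≤
      ((1 - lam) + lam * α * L) * ‖h - h'‖ := by
  have hsub : leakyStep lam φ Wr Win b h x - leakyStep lam φ Wr Win b h' x =
      (1 - lam) • (h - h') + lam • (φ (Wr h + Win x + b) - φ (Wr h' + Win x + b)) := by
    simp only [leakyStep, smul_sub]; abel
  have hφh : ‖φ (Wr h + Win x + b) - φ (Wr h' + Win x + b)‖ ≤ L * ‖Wr (h - h')‖ := by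
    simpa only [map_sub, add_sub_add_right_eq_sub] using hφ (Wr h + Win x + b) (Wr h' + Win x + b)
  calc ‖leakyStep lam φ Wr Win b h x - leakyStep lam φ Wr Win b h' x‖
      ≤ (1 - lam) * ‖h - h'‖ + lam * ‖φ (Wr h + Win x + b) - φ (Wr h' + Win x + b)‖ := by
        rw [hsub]
        refine (norm_add_le _ _).trans_eq ?_
        rw [norm_smul, norm_smul, Real.norm_of_nonneg (sub_nonneg.2 hlam1),
          Real.norm_of_nonneg hlam]
    _ ≤ (1 - lam) * ‖h - h'‖ + lam * (L * (α * ‖h - h'‖)) := by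
        gcongr
        exact hφh.trans (by gcongr; exact Wr.le_of_opNorm_le hWr _)
    _ = ((1 - lam) + lam * α * L) * ‖h - h'‖ := by ring

end LeakyStep

theorem reservoir_fading_memory_general
    {N d : ℕ}
    (lam α Lphi : ℝ) (hlam : 0 < lam) (hlam1 : lam ≤ 1)
    (hL0 : 0 ≤ Lphi) (hL1 : Lphi ≤ 1)
    (Wr : EuclideanSpace ℝ (Fin N) →L[ℝ] EuclideanSpace ℝ (Fin N))
    (hWr : ‖Wr‖ ≤ α)
    (Win : EuclideanSpace ℝ (Fin d) →L[ℝ] EuclideanSpace ℝ (Fin N))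
    (b : EuclideanSpace ℝ (Fin N))
    (φ : EuclideanSpace ℝ (Fin N) → EuclideanSpace ℝ (Fin N))
    (hφ : ∀ u v, ‖φ u - φ v‖ ≤ Lphi * ‖u - v‖)
    (x₁ x₂ : ℕ → EuclideanSpace ℝ (Fin d))
    (h₁ h₂ : ℕ → EuclideanSpace ℝ (Fin N))
    (hupd₁ : ∀ t, h₁ (t + 1) = (1 - lam) • h₁ t + lam • φ (Wr (h₁ t) + Win (x₁ t) + b))
    (hupd₂ : ∀ t, h₂ (t + 1) = (1 - lam) • h₂ t + lam • φ (Wr (h₂ t) + Win (x₂ t) + b))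
    (h0 : h₁ 0 = h₂ 0)
    (t τ : ℕ) (hτ1 : 1 ≤ τ) (hτt : τ ≤ t)
    (hx : ∀ u, u ≠ t - τ → x₁ u = x₂ u) :
    ‖h₁ t - h₂ t‖ ≤
      lam * ‖Win‖ * ‖x₁ (t - τ) - x₂ (t - τ)‖ *
        ((1 - lam) + lam * α * Lphi) ^ (τ - 1) := by
  set s := t - τ
  set κ := (1 - lam) + lam * α * Lphi
  have hκ : 0 ≤ κ := by
    have : 0 ≤ α := (norm_nonneg Wr).trans hWr
    have : 0 ≤ lam * α * Lphi := by positivity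
    linarith
  have hagree : h₁ s = h₂ s :=
    eq_of_driven_by_inputs_eq_before (leakyStep lam φ Wr Win b) hupd₁ hupd₂ h0 s
      fun u hu => hx u hu.ne
  have hfirst : ‖h₁ (s + 1) - h₂ (s + 1)‖ ≤ lam * ‖Win‖ * ‖x₁ s - x₂ s‖ := by
    rw [hupd₁, hupd₂, hagree]
    refine (norm_leakyStep_sub_leakyStep_input_le hlam.le hL0 hφ _ _ _).trans ?_
    gcongr
    exact mul_le_of_le_one_right hlam.le hL1
  have hcontract : ∀ k, ‖h₁ (s + 1 + k + 1) - h₂ (s + 1 + k + 1)‖ ≤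
      κ * ‖h₁ (s + 1 + k) - h₂ (s + 1 + k)‖ := fun k => by
    rw [hupd₁, hupd₂, hx (s + 1 + k) (by omega)]
    exact norm_leakyStep_sub_leakyStep_state_le hlam.le hlam1 hL0 hφ hWr _ _ _
  rw [show t = s + 1 + (τ - 1) by omega]
  calc ‖h₁ (s + 1 + (τ - 1)) - h₂ (s + 1 + (τ - 1))‖
      ≤ κ ^ (τ - 1) * ‖h₁ (s + 1 + 0) - h₂ (s + 1 + 0)‖ :=
        le_geom (u := fun k => ‖h₁ (s + 1 + k) - h₂ (s + 1 + k)‖) hκ (τ - 1)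
          fun k _ => hcontract k
    _ ≤ κ ^ (τ - 1) * (lam * ‖Win‖ * ‖x₁ s - x₂ s‖) := by gcongr
    _ = lam * ‖Win‖ * ‖x₁ s - x₂ s‖ * κ ^ (τ - 1) := mul_comm _ _

/-- If two input sequences differ only at time t − τ (τ ≥ 1) and the trajectories start
from the same initial state, then
‖h¹_t − h²_t‖ ≤ λ‖W_in‖·‖x¹_{t−τ} − x²_{t−τ}‖·κ^{τ−1} with κ = (1−λ)+λαL_φ. -/
theorem reservoir_fading_memory
    {N d : ℕ}
    (lam α Lphi : ℝ) (hlam : 0 < lam) (hlam1 : lam ≤ 1)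
    (hα0 : 0 ≤ α) (hα1 : α < 1) (hL0 : 0 ≤ Lphi) (hL1 : Lphi ≤ 1)
    (Wr : EuclideanSpace ℝ (Fin N) →L[ℝ] EuclideanSpace ℝ (Fin N))
    (hWr : ‖Wr‖ ≤ α)
    (Win : EuclideanSpace ℝ (Fin d) →L[ℝ] EuclideanSpace ℝ (Fin N))
    (b : EuclideanSpace ℝ (Fin N))
    (φ : EuclideanSpace ℝ (Fin N) → EuclideanSpace ℝ (Fin N))
    (hφ : ∀ u v, ‖φ u - φ v‖ ≤ Lphi * ‖u - v‖)
    (x₁ x₂ : ℕ → EuclideanSpace ℝ (Fin d))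
    (h₁ h₂ : ℕ → EuclideanSpace ℝ (Fin N))
    (hupd₁ : ∀ t, h₁ (t + 1) = (1 - lam) • h₁ t + lam • φ (Wr (h₁ t) + Win (x₁ t) + b))
    (hupd₂ : ∀ t, h₂ (t + 1) = (1 - lam) • h₂ t + lam • φ (Wr (h₂ t) + Win (x₂ t) + b))
    (h0 : h₁ 0 = h₂ 0)
    (t τ : ℕ) (hτ1 : 1 ≤ τ) (hτt : τ ≤ t)
    (hx : ∀ u, u ≠ t - τ → x₁ u = x₂ u) :
    ‖h₁ t - h₂ t‖ ≤
      lam * ‖Win‖ * ‖x₁ (t - τ) - x₂ (t - τ)‖ *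
        ((1 - lam) + lam * α * Lphi) ^ (τ - 1) :=
  reservoir_fading_memory_general lam α Lphi hlam hlam1 hL0 hL1 Wr hWr Win b φ hφ x₁ x₂ h₁ h₂ hupd₁
    hupd₂ h0 t τ hτ1 hτt hx
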